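/- arXiv:2209.08003 — 6 statements merged into one kernel-verified Lean document; each statement's English description precedes it below -/
import Mathlib

section
/- Let n ≥ 1, let D be an n×n real diagonal matrix with strictly positive diagonal entries, let Q be an n×n real orthogonal matrix, and let Λ be an n×n real diagonal matrix with all diagonal entries in [0,1]. Set W = D^{-1/2} Q Λ Qᵀ D^{1/2} and W⁺ = D^{-1/2} Q Λ⁺ Qᵀ D^{1/2}, where Λ⁺ is the diagonal matrix with Λ⁺_ii = Λ_ii⁻¹ if Λ_ii > 0 and Λ⁺_ii = 0 otherwise. Then the matrix D(I − W)W⁺ is symmetric and positive semidefinite. -/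
/-!
With `S = D^{1/2}`, the factors `S⁻¹ Q` and `Qᵀ S` of `W` and `W⁺` cancel against each other,
so `D (I - W) W⁺ = S Q (Λ⁺ - Λ Λ⁺) Qᵀ S`. The middle factor is diagonal with entries
`λ⁻¹ - 1 ≥ 0` (for `0 < λ ≤ 1`) or `0`, and a congruence `B M Bᵀ` of a positive semidefinite
matrix is positive semidefinite.
-/

open Matrix

theorem ite_inv_sub_mul_ite_inv_nonneg {a : ℝ} (ha : a ≤ 1) :
    0 ≤ (if 0 < a then a⁻¹ else 0) - a * (if 0 < a then a⁻¹ else 0) := by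
  split_ifs with h
  · rw [mul_inv_cancel₀ h.ne']
    linarith [one_le_inv_iff₀.mpr ⟨h, ha⟩]
  · simp

theorem mul_mul_one_sub_mul_eq {α : Type*} [Ring α] {s s' q q' : α}
    (hs : s * s' = 1) (hq : q' * q = 1) (a b : α) :
    s * s * (1 - s' * q * a * q' * s) * (s' * q * b * q' * s) = s * q * (b - a * b) * q' * s := by
  have cancel {u v : α} (h : u * v = 1) (x : α) : u * (v * x) = x := by
    rw [← mul_assoc, h, one_mul]
  simp only [mul_sub, sub_mul, mul_one, mul_assoc, cancel hs, cancel hq]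

theorem stmt_0_general (n : ℕ)
    (d l : Fin n → ℝ) (hd : ∀ i, 0 < d i) (hl : ∀ i, 0 ≤ l i ∧ l i ≤ 1)
    (Q W Wp : Matrix (Fin n) (Fin n) ℝ)
    (hQ : Qᵀ * Q = 1)
    (hW : W = diagonal (fun i => (Real.sqrt (d i))⁻¹) * Q * diagonal l * Qᵀ *
      diagonal (fun i => Real.sqrt (d i)))
    (hWp : Wp = diagonal (fun i => (Real.sqrt (d i))⁻¹) * Q *
      diagonal (fun i => if 0 < l i then (l i)⁻¹ else 0) * Qᵀ *
      diagonal (fun i => Real.sqrt (d i))) :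
    (diagonal d * (1 - W) * Wp)ᵀ = diagonal d * (1 - W) * Wp ∧
    ∀ x : Fin n → ℝ, 0 ≤ x ⬝ᵥ (diagonal d * (1 - W) * Wp) *ᵥ x := by
  set S := diagonal fun i => Real.sqrt (d i)
  set lp : Fin n → ℝ := fun i => if 0 < l i then (l i)⁻¹ else 0
  have hS : S * diagonal (fun i => (Real.sqrt (d i))⁻¹) = 1 := by
    rw [diagonal_mul_diagonal, ← diagonal_one]
    exact congrArg diagonal (funext fun i => mul_inv_cancel₀ (Real.sqrt_pos.mpr (hd i)).ne')
  have hSt : Sᵀ = S := diagonal_transpose _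
  have hD : diagonal d = S * S := by
    rw [diagonal_mul_diagonal]
    exact congrArg diagonal (funext fun i => (Real.mul_self_sqrt (hd i).le).symm)
  have key : diagonal d * (1 - W) * Wp
      = (S * Q) * diagonal (fun i => lp i - l i * lp i) * (S * Q)ᴴ := by
    rw [hD, hW, hWp, mul_mul_one_sub_mul_eq hS hQ, diagonal_mul_diagonal, diagonal_sub,
      conjTranspose_eq_transpose_of_trivial, transpose_mul, hSt]
    simp only [mul_assoc]
  have hpsd : (diagonal d * (1 - W) * Wp).PosSemidef := by
    rw [key]
    exact (PosSemidef.diagonal fun i => ite_inv_sub_mul_ite_inv_nonneg (hl i).2)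
      |>.mul_mul_conjTranspose_same _
  exact ⟨hpsd.isHermitian, hpsd.dotProduct_mulVec_nonneg⟩

theorem stmt_0 (n : ℕ) (hn : 1 ≤ n)
    (d l : Fin n → ℝ) (hd : ∀ i, 0 < d i) (hl : ∀ i, 0 ≤ l i ∧ l i ≤ 1)
    (Q W Wp : Matrix (Fin n) (Fin n) ℝ)
    (hQ : Qᵀ * Q = 1)
    (hW : W = diagonal (fun i => (Real.sqrt (d i))⁻¹) * Q * diagonal l * Qᵀ *
      diagonal (fun i => Real.sqrt (d i)))
    (hWp : Wp = diagonal (fun i => (Real.sqrt (d i))⁻¹) * Q *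
      diagonal (fun i => if 0 < l i then (l i)⁻¹ else 0) * Qᵀ *
      diagonal (fun i => Real.sqrt (d i))) :
    (diagonal d * (1 - W) * Wp)ᵀ = diagonal d * (1 - W) * Wp ∧
    ∀ x : Fin n → ℝ, 0 ≤ x ⬝ᵥ (diagonal d * (1 - W) * Wp) *ᵥ x :=
  stmt_0_general n d l hd hl Q W Wp hQ hW hWp
end

section
/- Let n ≥ 1, let D be an n×n real diagonal matrix with strictly positive diagonal entries, let Q be an n×n real orthogonal matrix, and let Λ be an n×n real diagonal matrix with all diagonal entries in [0,1]. Set W = D^{-1/2} Q Λ Qᵀ D^{1/2} and W⁺ = D^{-1/2} Q Λ⁺ Qᵀ D^{1/2}, where Λ⁺ is the diagonal matrix with Λ⁺_ii = Λ_ii⁻¹ if Λ_ii > 0 and Λ⁺_ii = 0 otherwise. Then the function q : ℝⁿ → ℝ defined by q(x) = (1/2) xᵀ D(I − W)W⁺ x is nonnegative on ℝⁿ and convex on ℝⁿ. -/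
/-! With `S = D^{1/2}` and `QQᵀ = 1`, `D(I - W)W⁺ = (SQ) (I - Λ)Λ⁺ (SQ)ᵀ`, a congruence of a diagonal
matrix with entries `(1 - λᵢ)λᵢ⁺ ≥ 0`; hence it is positive semidefinite and `q ≥ 0`. Convexity
follows because every quadratic form satisfies
`q(tx + (1-t)y) = t q(x) + (1-t) q(y) - t(1-t) q(x - y)`. -/

open Matrix

section QuadraticForm

variable {ι R : Type*} [Fintype ι] [CommRing R]

theorem dotProduct_mulVec_smul_add_one_sub_smul (A : Matrix ι ι R) (x y : ι → R) (t : R) :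
    (t • x + (1 - t) • y) ⬝ᵥ A *ᵥ (t • x + (1 - t) • y) =
      t * (x ⬝ᵥ A *ᵥ x) + (1 - t) * (y ⬝ᵥ A *ᵥ y) - t * (1 - t) * ((x - y) ⬝ᵥ A *ᵥ (x - y)) := by
  simp only [mulVec_add, mulVec_sub, mulVec_smul, add_dotProduct, sub_dotProduct, dotProduct_add,
    dotProduct_sub, smul_dotProduct, dotProduct_smul, smul_eq_mul]
  ring

theorem dotProduct_mulVec_smul_add_one_sub_smul_le [LinearOrder R] [IsStrictOrderedRing R]
    {A : Matrix ι ι R} (hA : ∀ z, 0 ≤ z ⬝ᵥ A *ᵥ z) (x y : ι → R) {t : R} (ht₀ : 0 ≤ t)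
    (ht₁ : t ≤ 1) :
    (t • x + (1 - t) • y) ⬝ᵥ A *ᵥ (t • x + (1 - t) • y) ≤
      t * (x ⬝ᵥ A *ᵥ x) + (1 - t) * (y ⬝ᵥ A *ᵥ y) := by
  rw [dotProduct_mulVec_smul_add_one_sub_smul]
  have : 0 ≤ t * (1 - t) * ((x - y) ⬝ᵥ A *ᵥ (x - y)) :=
    mul_nonneg (mul_nonneg ht₀ (sub_nonneg.2 ht₁)) (hA _)
  linarith

end QuadraticForm

theorem mul_one_sub_conj_mul_conj {ι R : Type*} [Fintype ι] [DecidableEq ι] [CommRing R]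
    {S S' Q : Matrix ι ι R} (hS : S * S' = 1) (hQ : Qᵀ * Q = 1) (L L' : Matrix ι ι R) :
    S * S * (1 - S' * Q * L * Qᵀ * S) * (S' * Q * L' * Qᵀ * S) =
      S * Q * ((1 - L) * L') * Qᵀ * S := by
  have hSS : S * S = S * Q * Qᵀ * S := by
    rw [Matrix.mul_assoc S Q, mul_eq_one_comm.1 hQ, Matrix.mul_one]
  have hfirst : S * S * (1 - S' * Q * L * Qᵀ * S) = S * Q * (1 - L) * Qᵀ * S := by
    simp only [Matrix.mul_sub, Matrix.sub_mul, Matrix.mul_one, Matrix.mul_assoc]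
    rw [← Matrix.mul_assoc S S', hS, Matrix.one_mul, hSS]
    simp only [Matrix.mul_assoc]
  rw [hfirst]
  simp only [Matrix.mul_assoc]
  rw [← Matrix.mul_assoc S S', hS, Matrix.one_mul, ← Matrix.mul_assoc Qᵀ Q, hQ, Matrix.one_mul]

theorem stmt_1_general (n : ℕ)
    (d l : Fin n → ℝ) (hd : ∀ i, 0 < d i) (hl : ∀ i, 0 ≤ l i ∧ l i ≤ 1)
    (Q W Wp : Matrix (Fin n) (Fin n) ℝ)
    (hQ : Qᵀ * Q = 1)
    (hW : W = diagonal (fun i => (Real.sqrt (d i))⁻¹) * Q * diagonal l * Qᵀ *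
      diagonal (fun i => Real.sqrt (d i)))
    (hWp : Wp = diagonal (fun i => (Real.sqrt (d i))⁻¹) * Q *
      diagonal (fun i => if 0 < l i then (l i)⁻¹ else 0) * Qᵀ *
      diagonal (fun i => Real.sqrt (d i)))
    (q : (Fin n → ℝ) → ℝ)
    (hq : ∀ x, q x = (1 / 2) * (x ⬝ᵥ (diagonal d * (1 - W) * Wp) *ᵥ x)) :
    (∀ x : Fin n → ℝ, 0 ≤ q x) ∧
    (∀ x y : Fin n → ℝ, ∀ t : ℝ, 0 ≤ t → t ≤ 1 →
      q (t • x + (1 - t) • y) ≤ t * q x + (1 - t) * q y) := by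
  set S := diagonal (fun i => Real.sqrt (d i))
  have hS : S * diagonal (fun i => (Real.sqrt (d i))⁻¹) = 1 := by
    rw [diagonal_mul_diagonal, ← diagonal_one]
    exact congrArg diagonal (funext fun i => mul_inv_cancel₀ (Real.sqrt_pos.2 (hd i)).ne')
  have hD : diagonal d = S * S := by
    rw [diagonal_mul_diagonal]
    exact congrArg diagonal (funext fun i => (Real.mul_self_sqrt (hd i).le).symm)
  have hweights :
      PosSemidef ((1 - diagonal l) * diagonal fun i => if 0 < l i then (l i)⁻¹ else 0) := by
    rw [← diagonal_one, diagonal_sub, diagonal_mul_diagonal]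
    refine .diagonal fun i => mul_nonneg (sub_nonneg.2 (hl i).2) ?_
    split_ifs <;> simp [(hl i).1]
  have hSQ : (S * Q)ᴴ = Qᵀ * S := by
    simp [S]
  have hpsd : PosSemidef (diagonal d * (1 - W) * Wp) := by
    rw [hD, hW, hWp, mul_one_sub_conj_mul_conj hS hQ, Matrix.mul_assoc _ Qᵀ, ← hSQ]
    exact hweights.mul_mul_conjTranspose_same (S * Q)
  have hnonneg : ∀ x, 0 ≤ x ⬝ᵥ (diagonal d * (1 - W) * Wp) *ᵥ x := fun x => by
    simpa using hpsd.dotProduct_mulVec_nonneg x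
  refine ⟨fun x => ?_, fun x y t ht₀ ht₁ => ?_⟩
  · rw [hq]
    exact mul_nonneg (by norm_num) (hnonneg x)
  · simp only [hq]
    linarith [dotProduct_mulVec_smul_add_one_sub_smul_le hnonneg x y ht₀ ht₁]

theorem stmt_1 (n : ℕ) (hn : 1 ≤ n)
    (d l : Fin n → ℝ) (hd : ∀ i, 0 < d i) (hl : ∀ i, 0 ≤ l i ∧ l i ≤ 1)
    (Q W Wp : Matrix (Fin n) (Fin n) ℝ)
    (hQ : Qᵀ * Q = 1)
    (hW : W = diagonal (fun i => (Real.sqrt (d i))⁻¹) * Q * diagonal l * Qᵀ *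
      diagonal (fun i => Real.sqrt (d i)))
    (hWp : Wp = diagonal (fun i => (Real.sqrt (d i))⁻¹) * Q *
      diagonal (fun i => if 0 < l i then (l i)⁻¹ else 0) * Qᵀ *
      diagonal (fun i => Real.sqrt (d i)))
    (q : (Fin n → ℝ) → ℝ)
    (hq : ∀ x, q x = (1 / 2) * (x ⬝ᵥ (diagonal d * (1 - W) * Wp) *ᵥ x)) :
    (∀ x : Fin n → ℝ, 0 ≤ q x) ∧
    (∀ x y : Fin n → ℝ, ∀ t : ℝ, 0 ≤ t → t ≤ 1 →
      q (t • x + (1 - t) • y) ≤ t * q x + (1 - t) * q y) :=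
  stmt_1_general n d l hd hl Q W Wp hQ hW hWp q hq
end

section
/- Let n ≥ 1, let D be an n×n real diagonal matrix with strictly positive diagonal entries, let Q be an n×n real orthogonal matrix, and let Λ be an n×n real diagonal matrix with all diagonal entries in [0,1]. Set W = D^{-1/2} Q Λ Qᵀ D^{1/2} and W⁺ = D^{-1/2} Q Λ⁺ Qᵀ D^{1/2}, where Λ⁺ is the diagonal matrix with Λ⁺_ii = Λ_ii⁻¹ if Λ_ii > 0 and Λ⁺_ii = 0 otherwise. Then for every x ∈ ℝⁿ, the vector Wx lies in R(W) and for every z ∈ R(W) one has (1/2)(Wx − x)ᵀ D (Wx − x) + (1/2)(Wx)ᵀ D(I − W)W⁺ (Wx) ≤ (1/2)(z − x)ᵀ D (z − x) + (1/2) zᵀ D(I − W)W⁺ z. That is, W is the scaled proximal operator of the kernel regularizer Φ_W with respect to the D-weighted norm. -/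
/-!
Write `D^{1/2} = S` and `P = Qᵀ S`, so that `D = Pᵀ P`, `W = P⁻¹ Λ P` and `W⁺ = P⁻¹ Λ⁺ P`.
In the coordinates `y = P v` both quadratic forms become diagonal, `D (I - W) W⁺ = Pᵀ (I - Λ) Λ⁺ P`,
and the proximal problem splits into the scalar problems
`min_s (s - w)² + (1 - λ) λ⁻¹ s²` over `s ∈ λ ℝ`, solved by `s = λ w`: the excess of the value at
`s = λ t` over the value at `λ w` is `λ (t - w)² ≥ 0`.
-/

open Matrix

theorem sq_sub_add_one_sub_mul_inv_mul_sq_le {c : ℝ} (hc : 0 ≤ c) (w t : ℝ) :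
    (c * w - w) ^ 2 + (1 - c) * c⁻¹ * (c * w) ^ 2 ≤
      (c * t - w) ^ 2 + (1 - c) * c⁻¹ * (c * t) ^ 2 := by
  have hinv : ∀ s : ℝ, c⁻¹ * (c * s) ^ 2 = c * s ^ 2 := fun s => by
    rcases hc.eq_or_lt with rfl | hpos
    · simp
    · field_simp
  simp only [mul_assoc, hinv]
  nlinarith [mul_nonneg hc (sq_nonneg (t - w))]

section

variable {ι : Type*} [Fintype ι]

/-- The objective of the `D`-scaled proximal problem for the regularizer `z ↦ ½ zᵀ R z`. -/
noncomputable def proxObjective (D R : Matrix ι ι ℝ) (x z : ι → ℝ) : ℝ :=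
  (1 / 2) * ((z - x) ⬝ᵥ D *ᵥ (z - x)) + (1 / 2) * (z ⬝ᵥ R *ᵥ z)

variable [DecidableEq ι]

theorem dotProduct_transpose_mul_diagonal_mul_mulVec {κ R : Type*} [Fintype κ] [CommRing R]
    (P : Matrix ι κ R) (f : ι → R) (a : κ → R) :
    a ⬝ᵥ (Pᵀ * diagonal f * P) *ᵥ a = ∑ i, f i * (P *ᵥ a) i ^ 2 := by
  rw [← mulVec_mulVec, ← mulVec_mulVec, dotProduct_mulVec, vecMul_transpose, dotProduct]
  simp only [mulVec_diagonal]
  exact Finset.sum_congr rfl fun i _ => by ring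

theorem proxObjective_transpose_mul_diagonal_mul (P : Matrix ι ι ℝ) (g x z : ι → ℝ) :
    proxObjective (Pᵀ * P) (Pᵀ * diagonal g * P) x z =
      (1 / 2) * ∑ i, ((P *ᵥ z - P *ᵥ x) i ^ 2 + g i * (P *ᵥ z) i ^ 2) := by
  have hD : Pᵀ * P = Pᵀ * diagonal 1 * P := by rw [diagonal_one', Matrix.mul_one]
  rw [proxObjective, hD, dotProduct_transpose_mul_diagonal_mul_mulVec,
    dotProduct_transpose_mul_diagonal_mul_mulVec, mulVec_sub, ← mul_add,
    ← Finset.sum_add_distrib]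
  simp only [Pi.one_apply, one_mul]

theorem transpose_mul_self_mul_one_sub_conj_mul_conj {P Pinv : Matrix ι ι ℝ}
    (hP : Pinv * P = 1) (a b : ι → ℝ) :
    Pᵀ * P * (1 - Pinv * diagonal a * P) * (Pinv * diagonal b * P) =
      Pᵀ * diagonal ((1 - a) * b) * P := by
  have hP' : P * Pinv = 1 := mul_eq_one_comm.mp hP
  have h1 : 1 - Pinv * diagonal a * P = Pinv * diagonal (1 - a) * P := by
    rw [show diagonal (1 - a) = 1 - diagonal a from (diagonal_sub 1 a).symm.trans
      (by rw [diagonal_one']), Matrix.mul_sub, Matrix.sub_mul, Matrix.mul_one, hP]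
  rw [h1, show diagonal ((1 - a) * b) = diagonal (1 - a) * diagonal b from
    (diagonal_mul_diagonal _ _).symm]
  simp only [Matrix.mul_assoc]
  rw [← Matrix.mul_assoc P Pinv, hP', Matrix.one_mul, ← Matrix.mul_assoc P Pinv, hP',
    Matrix.one_mul]

theorem mulVec_conj_diagonal_mulVec {P Pinv : Matrix ι ι ℝ} (hP : P * Pinv = 1)
    (l v : ι → ℝ) : P *ᵥ ((Pinv * diagonal l * P) *ᵥ v) = l * (P *ᵥ v) := by
  rw [mulVec_mulVec, ← Matrix.mul_assoc, ← Matrix.mul_assoc, hP, Matrix.one_mul,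
    ← mulVec_mulVec]
  exact funext (mulVec_diagonal l _)

theorem proxObjective_conj_diagonal_le {P Pinv : Matrix ι ι ℝ} (hP : Pinv * P = 1)
    {l : ι → ℝ} (hl : ∀ i, 0 ≤ l i) (x u : ι → ℝ) :
    proxObjective (Pᵀ * P) (Pᵀ * P * (1 - Pinv * diagonal l * P) * (Pinv * diagonal l⁻¹ * P))
        x ((Pinv * diagonal l * P) *ᵥ x) ≤
      proxObjective (Pᵀ * P)
        (Pᵀ * P * (1 - Pinv * diagonal l * P) * (Pinv * diagonal l⁻¹ * P))
        x ((Pinv * diagonal l * P) *ᵥ u) := by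
  have hP' : P * Pinv = 1 := mul_eq_one_comm.mp hP
  rw [transpose_mul_self_mul_one_sub_conj_mul_conj hP, proxObjective_transpose_mul_diagonal_mul,
    proxObjective_transpose_mul_diagonal_mul, mulVec_conj_diagonal_mulVec hP',
    mulVec_conj_diagonal_mulVec hP']
  refine mul_le_mul_of_nonneg_left (Finset.sum_le_sum fun i _ => ?_) (by norm_num)
  simpa only [Pi.mul_apply, Pi.sub_apply, Pi.inv_apply, Pi.one_apply, mul_assoc] using
    sq_sub_add_one_sub_mul_inv_mul_sq_le (hl i) ((P *ᵥ x) i) ((P *ᵥ u) i)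

theorem diagonal_inv_sqrt_mul_mul_transpose_mul_diagonal_sqrt {d : ι → ℝ} (hd : ∀ i, 0 < d i)
    {Q : Matrix ι ι ℝ} (hQ : Q * Qᵀ = 1) :
    (diagonal (fun i => (√(d i))⁻¹) * Q) * (Qᵀ * diagonal fun i => √(d i)) = 1 := by
  rw [Matrix.mul_assoc, ← Matrix.mul_assoc Q, hQ, Matrix.one_mul, diagonal_mul_diagonal,
    ← diagonal_one]
  exact congrArg diagonal (funext fun i => inv_mul_cancel₀ (Real.sqrt_pos.mpr (hd i)).ne')

theorem transpose_mul_self_of_mul_diagonal_sqrt {d : ι → ℝ} (hd : ∀ i, 0 ≤ d i)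
    {Q : Matrix ι ι ℝ} (hQ : Q * Qᵀ = 1) :
    (Qᵀ * diagonal fun i => √(d i))ᵀ * (Qᵀ * diagonal fun i => √(d i)) = diagonal d := by
  rw [transpose_mul, transpose_transpose, diagonal_transpose, Matrix.mul_assoc,
    ← Matrix.mul_assoc Q, hQ, Matrix.one_mul, diagonal_mul_diagonal]
  exact congrArg diagonal (funext fun i => Real.mul_self_sqrt (hd i))

end

theorem stmt_5_general (n : ℕ)
    (d l : Fin n → ℝ) (hd : ∀ i, 0 < d i) (hl : ∀ i, 0 ≤ l i ∧ l i ≤ 1)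
    (Q W Wp : Matrix (Fin n) (Fin n) ℝ)
    (hQ : Qᵀ * Q = 1)
    (hW : W = diagonal (fun i => (Real.sqrt (d i))⁻¹) * Q * diagonal l * Qᵀ *
      diagonal (fun i => Real.sqrt (d i)))
    (hWp : Wp = diagonal (fun i => (Real.sqrt (d i))⁻¹) * Q *
      diagonal (fun i => if 0 < l i then (l i)⁻¹ else 0) * Qᵀ *
      diagonal (fun i => Real.sqrt (d i))) :
    ∀ x : Fin n → ℝ,
      (∃ u : Fin n → ℝ, W *ᵥ u = W *ᵥ x) ∧
      ∀ z : Fin n → ℝ, (∃ u : Fin n → ℝ, W *ᵥ u = z) →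
        (1 / 2) * ((W *ᵥ x - x) ⬝ᵥ (diagonal d) *ᵥ (W *ᵥ x - x)) +
          (1 / 2) * ((W *ᵥ x) ⬝ᵥ (diagonal d * (1 - W) * Wp) *ᵥ (W *ᵥ x)) ≤
        (1 / 2) * ((z - x) ⬝ᵥ (diagonal d) *ᵥ (z - x)) +
          (1 / 2) * (z ⬝ᵥ (diagonal d * (1 - W) * Wp) *ᵥ z) := by
  intro x
  refine ⟨⟨x, rfl⟩, ?_⟩
  rintro z ⟨u, rfl⟩
  have hQ' : Q * Qᵀ = 1 := mul_eq_one_comm.mp hQ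
  have hpinv : (fun i => if 0 < l i then (l i)⁻¹ else 0) = l⁻¹ := funext fun i => by
    rcases (hl i).1.eq_or_lt with h | h
    · simp [← h]
    · simp [h]
  have key := proxObjective_conj_diagonal_le
    (diagonal_inv_sqrt_mul_mul_transpose_mul_diagonal_sqrt hd hQ') (fun i => (hl i).1) x u
  rw [transpose_mul_self_of_mul_diagonal_sqrt (fun i => (hd i).le) hQ'] at key
  subst hW hWp
  rw [hpinv]
  simpa only [proxObjective, Matrix.mul_assoc] using key

theorem stmt_5 (n : ℕ) (hn : 1 ≤ n)
    (d l : Fin n → ℝ) (hd : ∀ i, 0 < d i) (hl : ∀ i, 0 ≤ l i ∧ l i ≤ 1)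
    (Q W Wp : Matrix (Fin n) (Fin n) ℝ)
    (hQ : Qᵀ * Q = 1)
    (hW : W = diagonal (fun i => (Real.sqrt (d i))⁻¹) * Q * diagonal l * Qᵀ *
      diagonal (fun i => Real.sqrt (d i)))
    (hWp : Wp = diagonal (fun i => (Real.sqrt (d i))⁻¹) * Q *
      diagonal (fun i => if 0 < l i then (l i)⁻¹ else 0) * Qᵀ *
      diagonal (fun i => Real.sqrt (d i))) :
    ∀ x : Fin n → ℝ,
      (∃ u : Fin n → ℝ, W *ᵥ u = W *ᵥ x) ∧
      ∀ z : Fin n → ℝ, (∃ u : Fin n → ℝ, W *ᵥ u = z) →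
        (1 / 2) * ((W *ᵥ x - x) ⬝ᵥ (diagonal d) *ᵥ (W *ᵥ x - x)) +
          (1 / 2) * ((W *ᵥ x) ⬝ᵥ (diagonal d * (1 - W) * Wp) *ᵥ (W *ᵥ x)) ≤
        (1 / 2) * ((z - x) ⬝ᵥ (diagonal d) *ᵥ (z - x)) +
          (1 / 2) * (z ⬝ᵥ (diagonal d * (1 - W) * Wp) *ᵥ z) :=
  stmt_5_general n d l hd hl Q W Wp hQ hW hWp
end

section
/- Let n ≥ 1, let D be an n×n real diagonal matrix with strictly positive diagonal entries, let Q be an n×n real orthogonal matrix, and let Λ be an n×n real diagonal matrix with all diagonal entries in [0,1]. Set W = D^{-1/2} Q Λ Qᵀ D^{1/2}. Then the matrix Wᵀ D (I − W) is symmetric and positive semidefinite. -/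
/-!
Write `W = T P S` with `S = D^{1/2}`, `T = D^{-1/2}` and `P = Q Λ Qᵀ`. Since `D = Sᵀ S` and
`S T = 1`, the outer factors cancel and `Wᵀ D (I - W) = Sᵀ (P - P²) S`. As `Q` is orthogonal,
`P - P² = Q Λ(I - Λ) Qᵀ`, and `Λ(I - Λ)` is a nonnegative diagonal matrix because the entries
of `Λ` lie in `[0, 1]`; a congruence of a positive semidefinite matrix is positive semidefinite.
-/

open Matrix

namespace Matrix

variable {n R : Type*} [Fintype n] [DecidableEq n] [CommRing R]

theorem transpose_mul_mul_one_sub_of_mul_eq_one {S T P : Matrix n n R} (hST : S * T = 1)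
    (hP : Pᵀ = P) :
    (T * P * S)ᵀ * (Sᵀ * S) * (1 - T * P * S) = Sᵀ * (P - P * P) * S := by
  have hTS : Tᵀ * Sᵀ = 1 := by rw [← transpose_mul, hST, transpose_one]
  simp only [transpose_mul, hP, mul_sub, sub_mul, Matrix.mul_one, Matrix.mul_assoc]
  simp only [← Matrix.mul_assoc Tᵀ Sᵀ, hTS, ← Matrix.mul_assoc S T, hST, Matrix.one_mul]

theorem conj_diagonal_sub_mul_self_of_transpose_mul_self {Q : Matrix n n R}
    (hQ : Qᵀ * Q = 1) (l : n → R) :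
    Q * diagonal l * Qᵀ - Q * diagonal l * Qᵀ * (Q * diagonal l * Qᵀ) =
      Q * diagonal (fun i => l i * (1 - l i)) * Qᵀ := by
  have hsq : Q * diagonal l * Qᵀ * (Q * diagonal l * Qᵀ) =
      Q * diagonal (fun i => l i * l i) * Qᵀ := by
    simp only [Matrix.mul_assoc]
    rw [← Matrix.mul_assoc Qᵀ, hQ, Matrix.one_mul, ← Matrix.mul_assoc (diagonal l),
      diagonal_mul_diagonal]
  have hdiag :
      diagonal (fun i => l i * (1 - l i)) = diagonal l - diagonal (fun i => l i * l i) := by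
    rw [diagonal_sub]
    exact congrArg diagonal (funext fun i => mul_one_sub (l i) (l i))
  rw [hsq, hdiag, Matrix.mul_sub, Matrix.sub_mul]

end Matrix

theorem stmt_9_general (n : ℕ)
    (d l : Fin n → ℝ) (hd : ∀ i, 0 < d i) (hl : ∀ i, 0 ≤ l i ∧ l i ≤ 1)
    (Q W : Matrix (Fin n) (Fin n) ℝ)
    (hQ : Qᵀ * Q = 1)
    (hW : W = diagonal (fun i => (Real.sqrt (d i))⁻¹) * Q * diagonal l * Qᵀ *
      diagonal (fun i => Real.sqrt (d i))) :
    (Wᵀ * diagonal d * (1 - W))ᵀ = Wᵀ * diagonal d * (1 - W) ∧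
    ∀ x : Fin n → ℝ, 0 ≤ x ⬝ᵥ (Wᵀ * diagonal d * (1 - W)) *ᵥ x := by
  set S := diagonal fun i => Real.sqrt (d i)
  have hST : S * diagonal (fun i => (Real.sqrt (d i))⁻¹) = 1 := by
    rw [diagonal_mul_diagonal, ← diagonal_one]
    exact congrArg diagonal (funext fun i => mul_inv_cancel₀ (Real.sqrt_pos.2 (hd i)).ne')
  have hD : Sᵀ * S = diagonal d := by
    rw [diagonal_transpose, diagonal_mul_diagonal]
    exact congrArg diagonal (funext fun i => Real.mul_self_sqrt (hd i).le)
  have hP : (Q * diagonal l * Qᵀ)ᵀ = Q * diagonal l * Qᵀ := by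
    simp only [transpose_mul, transpose_transpose, diagonal_transpose, Matrix.mul_assoc]
  have hdecomp : Wᵀ * diagonal d * (1 - W) =
      Sᵀ * (Q * diagonal (fun i => l i * (1 - l i)) * Qᵀ) * S := by
    rw [← conj_diagonal_sub_mul_self_of_transpose_mul_self hQ, ← hD,
      ← transpose_mul_mul_one_sub_of_mul_eq_one hST hP, hW]
    simp only [Matrix.mul_assoc]
  have hpsd : (Wᵀ * diagonal d * (1 - W)).PosSemidef := by
    have hm : (diagonal fun i => l i * (1 - l i)).PosSemidef :=
      posSemidef_diagonal_iff.2 fun i => mul_nonneg (hl i).1 (sub_nonneg.2 (hl i).2)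
    rw [hdecomp]
    simpa only [conjTranspose_eq_transpose_of_trivial] using
      (hm.mul_mul_conjTranspose_same Q).conjTranspose_mul_mul_same S
  refine ⟨?_, fun x => ?_⟩
  · simpa only [IsHermitian, conjTranspose_eq_transpose_of_trivial] using hpsd.isHermitian
  · simpa only [star_trivial] using hpsd.dotProduct_mulVec_nonneg x

theorem stmt_9 (n : ℕ) (hn : 1 ≤ n)
    (d l : Fin n → ℝ) (hd : ∀ i, 0 < d i) (hl : ∀ i, 0 ≤ l i ∧ l i ≤ 1)
    (Q W : Matrix (Fin n) (Fin n) ℝ)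
    (hQ : Qᵀ * Q = 1)
    (hW : W = diagonal (fun i => (Real.sqrt (d i))⁻¹) * Q * diagonal l * Qᵀ *
      diagonal (fun i => Real.sqrt (d i))) :
    (Wᵀ * diagonal d * (1 - W))ᵀ = Wᵀ * diagonal d * (1 - W) ∧
    ∀ x : Fin n → ℝ, 0 ≤ x ⬝ᵥ (Wᵀ * diagonal d * (1 - W)) *ᵥ x :=
  stmt_9_general n d l hd hl Q W hQ hW
end

section
/- Let n, m ≥ 1, let D be an n×n real diagonal matrix with strictly positive diagonal entries, let Q be an n×n real orthogonal matrix, and let Λ be an n×n real diagonal matrix with all diagonal entries in [0,1]. Set W = D^{-1/2} Q Λ Qᵀ D^{1/2}. Let F be any m×n real matrix, y ∈ ℝᵐ, and ρ > 0. Define A = Wᵀ Fᵀ F W + ρ Wᵀ D (I − W) and b = Wᵀ Fᵀ y. Then the linear system A z = b is solvable: there exists z ∈ ℝⁿ with A z = b. -/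
/-!
Since `D^{1/2} W D^{-1/2} = Q Λ Qᵀ`, one computes
`Wᵀ D (I - W) = D^{1/2} Q (Λ - Λ²) Qᵀ D^{1/2} = Nᵀ N` with `N = (Λ - Λ²)^{1/2} Qᵀ D^{1/2}`,
so `A = Mᵀ M + (√ρ N)ᵀ (√ρ N)` with `M = F W` is a Gram matrix, and `b = Mᵀ y`.
Stacking `M` over `√ρ N` into `B`, the system reads `Bᵀ B z = Bᵀ (y, 0)`, which is solvable because
`Bᵀ B` and `Bᵀ` have the same rank and the range of `Bᵀ B` is contained in that of `Bᵀ`.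
-/

open Matrix

namespace Matrix

section OrderedField

variable {m n k R : Type*} [Fintype m] [Fintype n] [Fintype k]
  [Field R] [LinearOrder R] [IsStrictOrderedRing R]

theorem range_mulVecLin_transpose_mul_self (B : Matrix m n R) :
    LinearMap.range (Bᵀ * B).mulVecLin = LinearMap.range Bᵀ.mulVecLin := by
  refine Submodule.eq_of_le_of_finrank_eq ?_ ?_
  · rw [mulVecLin_mul]
    exact LinearMap.range_comp_le_range _ _
  · change (Bᵀ * B).rank = Bᵀ.rank
    rw [rank_transpose_mul_self, rank_transpose]

theorem exists_transpose_mul_self_mulVec_eq (B : Matrix m n R) (y : m → R) :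
    ∃ z, (Bᵀ * B) *ᵥ z = Bᵀ *ᵥ y :=
  (range_mulVecLin_transpose_mul_self B).ge ⟨y, rfl⟩

theorem exists_transpose_mul_self_add_mulVec_eq (M : Matrix m n R) (N : Matrix k n R)
    (y : m → R) : ∃ z, (Mᵀ * M + Nᵀ * N) *ᵥ z = Mᵀ *ᵥ y := by
  simpa [transpose_fromRows, fromCols_mul_fromRows, fromCols_mulVec_sumElim] using
    exists_transpose_mul_self_mulVec_eq (fromRows M N) (Sum.elim y 0)

end OrderedField

variable {n : Type*} [Fintype n] [DecidableEq n]

theorem transpose_mul_diagonal_mul_one_sub_eq {d l : n → ℝ} (hd : ∀ i, 0 < d i)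
    (hl : ∀ i, 0 ≤ l i ∧ l i ≤ 1) {Q W : Matrix n n ℝ} (hQ : Qᵀ * Q = 1)
    (hW : W = diagonal (fun i => (√(d i))⁻¹) * Q * diagonal l * Qᵀ *
      diagonal (fun i => √(d i))) :
    Wᵀ * diagonal d * (1 - W) =
      (diagonal (fun i => √(l i * (1 - l i))) * Qᵀ * diagonal (fun i => √(d i)))ᵀ *
        (diagonal (fun i => √(l i * (1 - l i))) * Qᵀ * diagonal (fun i => √(d i))) := by
  set E := diagonal (fun i => √(d i))
  set L := diagonal l
  set S := diagonal (fun i => √(l i * (1 - l i)))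
  have hsqrt : ∀ i, √(d i) ≠ 0 := fun i => (Real.sqrt_pos.mpr (hd i)).ne'
  have hE'E : ∀ X, diagonal (fun i => (√(d i))⁻¹) * (E * X) = X := by
    intro X
    rw [← Matrix.mul_assoc, diagonal_mul_diagonal]
    simp [inv_mul_cancel₀ (hsqrt _)]
  have hEE' : ∀ X, E * (diagonal (fun i => (√(d i))⁻¹) * X) = X := by
    intro X
    rw [← Matrix.mul_assoc, diagonal_mul_diagonal]
    simp [mul_inv_cancel₀ (hsqrt _)]
  have hEE : diagonal d = E * E := by
    rw [diagonal_mul_diagonal]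
    congr; funext i; exact (Real.mul_self_sqrt (hd i).le).symm
  have hSS : S * S = L - L * L := by
    simp only [S, L, diagonal_mul_diagonal, diagonal_sub]
    congr; funext i
    rw [Real.mul_self_sqrt (mul_nonneg (hl i).1 (sub_nonneg.mpr (hl i).2))]
    ring
  have hQQ : ∀ X, Qᵀ * (Q * X) = X := fun X => by rw [← Matrix.mul_assoc, hQ, Matrix.one_mul]
  calc Wᵀ * diagonal d * (1 - W) = E * Q * (L - L * L) * Qᵀ * E := by
        subst hW
        simp only [hEE, transpose_mul, transpose_transpose, diagonal_transpose, E, L,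
          Matrix.mul_sub, Matrix.sub_mul, Matrix.mul_one, Matrix.mul_assoc, hE'E, hEE', hQQ]
    _ = _ := by
        rw [← hSS]
        simp only [transpose_mul, transpose_transpose, diagonal_transpose, E, S, Matrix.mul_assoc]

end Matrix

theorem stmt_10_general (n m : ℕ)
    (d l : Fin n → ℝ) (hd : ∀ i, 0 < d i) (hl : ∀ i, 0 ≤ l i ∧ l i ≤ 1)
    (Q W : Matrix (Fin n) (Fin n) ℝ)
    (hQ : Qᵀ * Q = 1)
    (hW : W = diagonal (fun i => (Real.sqrt (d i))⁻¹) * Q * diagonal l * Qᵀ *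
      diagonal (fun i => Real.sqrt (d i)))
    (F : Matrix (Fin m) (Fin n) ℝ) (y : Fin m → ℝ) (ρ : ℝ) (hρ : 0 < ρ)
    (A : Matrix (Fin n) (Fin n) ℝ) (b : Fin n → ℝ)
    (hA : A = Wᵀ * Fᵀ * F * W + ρ • (Wᵀ * diagonal d * (1 - W)))
    (hb : b = (Wᵀ * Fᵀ) *ᵥ y) :
    ∃ z : Fin n → ℝ, A *ᵥ z = b := by
  set N := diagonal (fun i => √(l i * (1 - l i))) * Qᵀ * diagonal (fun i => √(d i))
  have hA' : A = (F * W)ᵀ * (F * W) + (√ρ • N)ᵀ * (√ρ • N) := by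
    rw [hA, transpose_mul_diagonal_mul_one_sub_eq hd hl hQ hW, transpose_smul, smul_mul_smul,
      Real.mul_self_sqrt hρ.le, transpose_mul F W, Matrix.mul_assoc (Wᵀ * Fᵀ)]
  rw [hA', hb, ← transpose_mul]
  exact exists_transpose_mul_self_add_mulVec_eq _ _ y

theorem stmt_10 (n m : ℕ) (hn : 1 ≤ n) (hm : 1 ≤ m)
    (d l : Fin n → ℝ) (hd : ∀ i, 0 < d i) (hl : ∀ i, 0 ≤ l i ∧ l i ≤ 1)
    (Q W : Matrix (Fin n) (Fin n) ℝ)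
    (hQ : Qᵀ * Q = 1)
    (hW : W = diagonal (fun i => (Real.sqrt (d i))⁻¹) * Q * diagonal l * Qᵀ *
      diagonal (fun i => Real.sqrt (d i)))
    (F : Matrix (Fin m) (Fin n) ℝ) (y : Fin m → ℝ) (ρ : ℝ) (hρ : 0 < ρ)
    (A : Matrix (Fin n) (Fin n) ℝ) (b : Fin n → ℝ)
    (hA : A = Wᵀ * Fᵀ * F * W + ρ • (Wᵀ * diagonal d * (1 - W)))
    (hb : b = (Wᵀ * Fᵀ) *ᵥ y) :
    ∃ z : Fin n → ℝ, A *ᵥ z = b :=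
  stmt_10_general n m d l hd hl Q W hQ hW F y ρ hρ A b hA hb
end

section
/- Let n, m ≥ 1, let D be an n×n real diagonal matrix with strictly positive diagonal entries, let Q be an n×n real orthogonal matrix, and let Λ be an n×n real diagonal matrix with all diagonal entries in [0,1]. Set W = D^{-1/2} Q Λ Qᵀ D^{1/2} and W⁺ = D^{-1/2} Q Λ⁺ Qᵀ D^{1/2}, where Λ⁺ is the diagonal matrix with Λ⁺_ii = Λ_ii⁻¹ if Λ_ii > 0 and Λ⁺_ii = 0 otherwise. Let F be any m×n real matrix, y ∈ ℝᵐ, and ρ > 0. Define the objective J(x) = (1/2)‖y − F x‖² + (ρ/2) xᵀ D (I − W) W⁺ x for x ∈ R(W), and define A = Wᵀ Fᵀ F W + ρ Wᵀ D (I − W) and b = Wᵀ Fᵀ y. Then x* ∈ R(W) satisfies J(x*) ≤ J(x) for all x ∈ R(W) if and only if there exists z ∈ ℝⁿ with A z = b and x* = W z. In particular, the minimization of J over R(W) is solvable. -/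
/-!
With `P = Qᵀ D^{1/2}` and `P' = D^{-1/2} Q` we have `P P' = I`, `D = Pᵀ P`, `W = P' Λ P` and
`W⁺ = P' Λ⁺ P`. Hence `Wᵀ D (I - W) = Pᵀ Λ (I - Λ) P` is positive semidefinite, and it is not
changed by the factor `W⁺ W`, so on `R(W)` the objective reads
`J (W z) = ½ zᵀ A z - bᵀ z + ½ ‖y‖²` with `A = (F W)ᵀ (F W) + ρ Wᵀ D (I - W)` positive
semidefinite. A positive semidefinite quadratic is minimised exactly at the solutions of `A z = b`,
and these exist: `b = (F W)ᵀ y` is orthogonal to `ker A ⊆ ker (F W)`, which is the orthogonal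
complement of the range of the symmetric matrix `A`.
-/

open Matrix

section Quadratic

variable {ι : Type*} [Fintype ι]

noncomputable def quadObjective (A : Matrix ι ι ℝ) (b z : ι → ℝ) : ℝ :=
  1 / 2 * (z ⬝ᵥ A *ᵥ z) - b ⬝ᵥ z

lemma Matrix.IsHermitian.dotProduct_mulVec_comm {A : Matrix ι ι ℝ} (hA : A.IsHermitian)
    (u v : ι → ℝ) : u ⬝ᵥ A *ᵥ v = v ⬝ᵥ A *ᵥ u := by
  rw [dotProduct_mulVec, ← mulVec_transpose, ← conjTranspose_eq_transpose_of_trivial, hA.eq,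
    dotProduct_comm]

lemma quadObjective_add_smul {A : Matrix ι ι ℝ} (hA : A.IsHermitian) (b z h : ι → ℝ) (t : ℝ) :
    quadObjective A b (z + t • h) =
      quadObjective A b z + t * (h ⬝ᵥ (A *ᵥ z - b)) + t ^ 2 / 2 * (h ⬝ᵥ A *ᵥ h) := by
  simp only [quadObjective, mulVec_add, mulVec_smul, dotProduct_add, add_dotProduct,
    dotProduct_smul, smul_dotProduct, smul_eq_mul, dotProduct_sub]
  linear_combination (t / 2) * hA.dotProduct_mulVec_comm z h - t * dotProduct_comm b h

lemma quadObjective_le_iff {A : Matrix ι ι ℝ} (hA : A.PosSemidef) (b z₀ : ι → ℝ) :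
    (∀ z, quadObjective A b z₀ ≤ quadObjective A b z) ↔ A *ᵥ z₀ = b := by
  constructor
  · intro hmin
    set r := A *ᵥ z₀ - b
    have hquad : ∀ t : ℝ, 0 ≤ (r ⬝ᵥ A *ᵥ r) / 2 * (t * t) + (r ⬝ᵥ r) * t + 0 := fun t => by
      have := hmin (z₀ + t • r)
      rw [quadObjective_add_smul hA.isHermitian] at this
      linarith
    have hdisc := discrim_le_zero hquad
    rw [discrim] at hdisc
    have hrr : r ⬝ᵥ r = 0 := by nlinarith
    exact sub_eq_zero.mp (dotProduct_self_eq_zero.mp hrr)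
  · intro hz₀ z
    have hnonneg : 0 ≤ (z - z₀) ⬝ᵥ A *ᵥ (z - z₀) := by
      simpa using hA.dotProduct_mulVec_nonneg (z - z₀)
    have := quadObjective_add_smul hA.isHermitian b z₀ (z - z₀) 1
    rw [one_smul, add_sub_cancel, hz₀, sub_self, dotProduct_zero] at this
    linarith

lemma exists_mulVec_eq_of_isHermitian [DecidableEq ι] {A : Matrix ι ι ℝ} (hA : A.IsHermitian)
    {b : ι → ℝ} (hb : ∀ v, A *ᵥ v = 0 → b ⬝ᵥ v = 0) : ∃ z, A *ᵥ z = b := by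
  have hT : (toEuclideanLin A).IsSymmetric := isSymmetric_toEuclideanLin_iff.mpr hA
  have hmem : WithLp.toLp 2 b ∈ LinearMap.range (toEuclideanLin A) := by
    rw [← Submodule.orthogonal_orthogonal (LinearMap.range _), hT.orthogonal_range]
    intro v hv
    rw [LinearMap.mem_ker, toLpLin_apply] at hv
    rw [EuclideanSpace.inner_eq_star_dotProduct, star_trivial]
    exact hb _ (by simpa using hv)
  obtain ⟨z, hz⟩ := hmem
  exact ⟨z.ofLp, by simpa [toLpLin_apply] using congrArg WithLp.ofLp hz⟩

variable {κ : Type*} [Fintype κ]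

lemma mulVec_dotProduct_mulVec_mulVec (W : Matrix κ ι ℝ) (K : Matrix κ κ ℝ) (z : ι → ℝ) :
    (W *ᵥ z) ⬝ᵥ K *ᵥ (W *ᵥ z) = z ⬝ᵥ (Wᵀ * K * W) *ᵥ z := by
  rw [← mulVec_mulVec, ← mulVec_mulVec, dotProduct_transpose_mulVec, dotProduct_comm]

lemma posSemidef_transpose_mul_self_add (B : Matrix κ ι ℝ) {N : Matrix ι ι ℝ}
    (hN : N.PosSemidef) : (Bᵀ * B + N).PosSemidef := by
  simpa using (posSemidef_conjTranspose_mul_self B).add hN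

lemma mulVec_eq_zero_of_transpose_mul_self_add {B : Matrix κ ι ℝ} {N : Matrix ι ι ℝ}
    (hN : N.PosSemidef) {v : ι → ℝ} (hv : (Bᵀ * B + N) *ᵥ v = 0) : B *ᵥ v = 0 := by
  have h0 : v ⬝ᵥ (Bᵀ * B + N) *ᵥ v = 0 := by rw [hv, dotProduct_zero]
  rw [add_mulVec, dotProduct_add, ← mulVec_mulVec, dotProduct_transpose_mulVec] at h0
  have hN0 : 0 ≤ v ⬝ᵥ N *ᵥ v := by simpa using hN.dotProduct_mulVec_nonneg v
  have hB0 : 0 ≤ (B *ᵥ v) ⬝ᵥ (B *ᵥ v) := by simpa using dotProduct_self_star_nonneg (B *ᵥ v)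
  exact dotProduct_self_eq_zero.mp (by linarith)

lemma exists_mulVec_eq_transpose_mulVec [DecidableEq ι] (B : Matrix κ ι ℝ) {N : Matrix ι ι ℝ}
    (hN : N.PosSemidef) (y : κ → ℝ) : ∃ z, (Bᵀ * B + N) *ᵥ z = Bᵀ *ᵥ y :=
  exists_mulVec_eq_of_isHermitian (posSemidef_transpose_mul_self_add B hN).isHermitian
    fun v hv => by
      rw [dotProduct_comm, dotProduct_transpose_mulVec,
        mulVec_eq_zero_of_transpose_mul_self_add hN hv, dotProduct_zero]

end Quadratic

section Conjugation

variable {R ι : Type*} [CommRing R] [Fintype ι] [DecidableEq ι] {P P' : Matrix ι ι R}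

lemma mul_conj_mul_conj (hP : P * P' = 1) (X K L : Matrix ι ι R) :
    X * K * P * (P' * L * P) = X * (K * L) * P := by
  simp only [Matrix.mul_assoc, ← Matrix.mul_assoc P P', hP, Matrix.one_mul]

lemma transpose_conj_mul_gram (hP : P * P' = 1) (L : Matrix ι ι R) :
    (P' * L * P)ᵀ * (Pᵀ * P) = Pᵀ * Lᵀ * P := by
  simp only [transpose_mul, Matrix.mul_assoc]
  rw [← Matrix.mul_assoc P'ᵀ, ← transpose_mul, hP, transpose_one, Matrix.one_mul]

lemma transpose_conj_mul_gram_mul_one_sub (hP : P * P' = 1) (L : Matrix ι ι R) :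
    (P' * L * P)ᵀ * (Pᵀ * P) * (1 - P' * L * P) = Pᵀ * (Lᵀ - Lᵀ * L) * P := by
  rw [transpose_conj_mul_gram hP, Matrix.mul_sub, Matrix.mul_one, mul_conj_mul_conj hP,
    Matrix.mul_sub, Matrix.sub_mul]

end Conjugation

section Penalty

variable {ι : Type*} [Fintype ι] [DecidableEq ι] {P P' : Matrix ι ι ℝ} {l : ι → ℝ}

lemma penalty_posSemidef (hP : P * P' = 1) (hl : ∀ i, 0 ≤ l i ∧ l i ≤ 1) :
    ((P' * diagonal l * P)ᵀ * (Pᵀ * P) * (1 - P' * diagonal l * P)).PosSemidef := by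
  rw [transpose_conj_mul_gram_mul_one_sub hP, diagonal_transpose, diagonal_mul_diagonal,
    diagonal_sub, ← conjTranspose_eq_transpose_of_trivial]
  refine PosSemidef.conjTranspose_mul_mul_same (PosSemidef.diagonal fun i => ?_) P
  simp only [Pi.zero_apply]
  nlinarith [hl i]

/-- Since `0⁻¹ = 0`, `diagonal l⁻¹` is the pseudo-inverse `Λ⁺`, and `l⁻¹ * l * l = l` entrywise. -/
lemma penalty_mul_pinv_mul (hP : P * P' = 1) (l : ι → ℝ) :
    (P' * diagonal l * P)ᵀ *
        ((Pᵀ * P) * (1 - P' * diagonal l * P) * (P' * diagonal l⁻¹ * P)) * (P' * diagonal l * P) =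
      (P' * diagonal l * P)ᵀ * (Pᵀ * P) * (1 - P' * diagonal l * P) := by
  set W := P' * diagonal l * P
  have hassoc : Wᵀ * ((Pᵀ * P) * (1 - W) * (P' * diagonal l⁻¹ * P)) * W =
      Wᵀ * (Pᵀ * P) * (1 - W) * (P' * diagonal l⁻¹ * P) * W := by
    simp only [Matrix.mul_assoc]
  rw [hassoc, transpose_conj_mul_gram_mul_one_sub hP, mul_conj_mul_conj hP, mul_conj_mul_conj hP]
  congr 2
  simp only [diagonal_transpose, diagonal_mul_diagonal, diagonal_sub]
  congr 1
  ext i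
  linear_combination (1 - l i) * inv_mul_mul_self (l i)

end Penalty

section Factorization

variable {K ι : Type*} [Field K] [Fintype ι] [DecidableEq ι] {Q : Matrix ι ι K} {s : ι → K}

lemma transpose_mul_diagonal_mul_diagonal_inv_mul (hQ : Qᵀ * Q = 1) (hs : ∀ i, s i ≠ 0) :
    Qᵀ * diagonal s * (diagonal (fun i => (s i)⁻¹) * Q) = 1 := by
  rw [Matrix.mul_assoc, ← Matrix.mul_assoc (diagonal s), diagonal_mul_diagonal]
  simp [hs, hQ]

lemma gram_transpose_mul_diagonal (hQ : Qᵀ * Q = 1) :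
    (Qᵀ * diagonal s)ᵀ * (Qᵀ * diagonal s) = diagonal (fun i => s i * s i) := by
  rw [transpose_mul, transpose_transpose, diagonal_transpose, Matrix.mul_assoc,
    ← Matrix.mul_assoc Q, mul_eq_one_comm.mp hQ, Matrix.one_mul, diagonal_mul_diagonal]

end Factorization

lemma objective_eq_quadObjective {ι κ : Type*} [Fintype ι] [Fintype κ] (B : Matrix κ ι ℝ)
    (M : Matrix ι ι ℝ) (y : κ → ℝ) (ρ : ℝ) (z : ι → ℝ) :
    1 / 2 * ((y - B *ᵥ z) ⬝ᵥ (y - B *ᵥ z)) + ρ / 2 * (z ⬝ᵥ M *ᵥ z) =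
      quadObjective (Bᵀ * B + ρ • M) (Bᵀ *ᵥ y) z + 1 / 2 * (y ⬝ᵥ y) := by
  have hBB : z ⬝ᵥ (Bᵀ * B) *ᵥ z = (B *ᵥ z) ⬝ᵥ (B *ᵥ z) := by
    rw [← mulVec_mulVec, dotProduct_transpose_mulVec]
  have hBy : (Bᵀ *ᵥ y) ⬝ᵥ z = y ⬝ᵥ B *ᵥ z := by
    rw [dotProduct_comm, dotProduct_transpose_mulVec]
  simp only [quadObjective, add_mulVec, dotProduct_add, smul_mulVec, dotProduct_smul, smul_eq_mul,
    hBB, hBy, sub_dotProduct, dotProduct_sub]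
  linear_combination (1 / 2 : ℝ) * dotProduct_comm y (B *ᵥ z)

section Reduction

variable {ι κ : Type*} [Fintype ι] {W : Matrix κ ι ℝ} {J : (κ → ℝ) → ℝ} {A : Matrix ι ι ℝ}
  {b : ι → ℝ} {c : ℝ}

lemma forall_range_le_iff (hA : A.PosSemidef)
    (hJW : ∀ z, J (W *ᵥ z) = quadObjective A b z + c) (u : ι → ℝ) :
    (∀ x, (∃ v, W *ᵥ v = x) → J (W *ᵥ u) ≤ J x) ↔ A *ᵥ u = b := by
  simp only [← quadObjective_le_iff hA, forall_exists_index, forall_apply_eq_imp_iff, hJW,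
    add_le_add_iff_right]

lemma minimizers_on_range_eq_image_solutions (hA : A.PosSemidef)
    (hJW : ∀ z, J (W *ᵥ z) = quadObjective A b z + c) (hsolv : ∃ z, A *ᵥ z = b) :
    (∀ xstar, (∃ u, W *ᵥ u = xstar) →
      ((∀ x, (∃ u, W *ᵥ u = x) → J xstar ≤ J x) ↔ (∃ z, A *ᵥ z = b ∧ xstar = W *ᵥ z))) ∧
    (∃ xstar, (∃ u, W *ᵥ u = xstar) ∧ ∀ x, (∃ u, W *ᵥ u = x) → J xstar ≤ J x) := by
  have hmin := forall_range_le_iff hA hJW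
  refine ⟨?_, ?_⟩
  · rintro _ ⟨u, rfl⟩
    constructor
    · exact fun h => ⟨u, (hmin u).mp h, rfl⟩
    · rintro ⟨z, hz, hWz⟩
      exact hWz ▸ (hmin z).mpr hz
  · obtain ⟨z, hz⟩ := hsolv
    exact ⟨W *ᵥ z, ⟨z, rfl⟩, (hmin z).mpr hz⟩

end Reduction

theorem stmt_12_general (n m : ℕ)
    (d l : Fin n → ℝ) (hd : ∀ i, 0 < d i) (hl : ∀ i, 0 ≤ l i ∧ l i ≤ 1)
    (Q W Wp : Matrix (Fin n) (Fin n) ℝ)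
    (hQ : Qᵀ * Q = 1)
    (hW : W = diagonal (fun i => (Real.sqrt (d i))⁻¹) * Q * diagonal l * Qᵀ *
      diagonal (fun i => Real.sqrt (d i)))
    (hWp : Wp = diagonal (fun i => (Real.sqrt (d i))⁻¹) * Q *
      diagonal (fun i => if 0 < l i then (l i)⁻¹ else 0) * Qᵀ *
      diagonal (fun i => Real.sqrt (d i)))
    (F : Matrix (Fin m) (Fin n) ℝ) (y : Fin m → ℝ) (ρ : ℝ) (hρ : 0 < ρ)
    (J : (Fin n → ℝ) → ℝ)
    (hJ : ∀ x, J x = (1 / 2) * ((y - F *ᵥ x) ⬝ᵥ (y - F *ᵥ x)) +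
      (ρ / 2) * (x ⬝ᵥ (diagonal d * (1 - W) * Wp) *ᵥ x))
    (A : Matrix (Fin n) (Fin n) ℝ) (b : Fin n → ℝ)
    (hA : A = Wᵀ * Fᵀ * F * W + ρ • (Wᵀ * diagonal d * (1 - W)))
    (hb : b = (Wᵀ * Fᵀ) *ᵥ y) :
    (∀ xstar : Fin n → ℝ, (∃ u : Fin n → ℝ, W *ᵥ u = xstar) →
      ((∀ x : Fin n → ℝ, (∃ u : Fin n → ℝ, W *ᵥ u = x) → J xstar ≤ J x) ↔
        (∃ z : Fin n → ℝ, A *ᵥ z = b ∧ xstar = W *ᵥ z))) ∧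
    (∃ xstar : Fin n → ℝ, (∃ u : Fin n → ℝ, W *ᵥ u = xstar) ∧
      ∀ x : Fin n → ℝ, (∃ u : Fin n → ℝ, W *ᵥ u = x) → J xstar ≤ J x) := by
  set P := Qᵀ * diagonal (fun i => √(d i))
  set P' := diagonal (fun i => (√(d i))⁻¹) * Q
  have hP : P * P' = 1 :=
    transpose_mul_diagonal_mul_diagonal_inv_mul hQ fun i => (Real.sqrt_pos.mpr (hd i)).ne'
  have hgram : Pᵀ * P = diagonal d := by
    simp only [P, gram_transpose_mul_diagonal hQ, Real.mul_self_sqrt (hd _).le]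
  have hpinv : (fun i => if 0 < l i then (l i)⁻¹ else 0) = l⁻¹ :=
    funext fun i => ite_eq_left_iff.mpr fun h => by simp [le_antisymm (not_lt.mp h) (hl i).1]
  have hW' : W = P' * diagonal l * P := by simp only [hW, P, P', Matrix.mul_assoc]
  have hWp' : Wp = P' * diagonal l⁻¹ * P := by simp only [hWp, hpinv, P, P', Matrix.mul_assoc]
  have hA' : A = (F * W)ᵀ * (F * W) + ρ • (Wᵀ * diagonal d * (1 - W)) := by
    simp only [hA, transpose_mul, Matrix.mul_assoc]
  have hpenalty : (ρ • (Wᵀ * diagonal d * (1 - W))).PosSemidef := by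
    rw [hW', ← hgram]
    exact (penalty_posSemidef hP hl).smul hρ.le
  have hApsd : A.PosSemidef := hA' ▸ posSemidef_transpose_mul_self_add _ hpenalty
  have hJW : ∀ z, J (W *ᵥ z) = quadObjective A b z + 1 / 2 * (y ⬝ᵥ y) := by
    intro z
    have hK : Wᵀ * (diagonal d * (1 - W) * Wp) * W = Wᵀ * diagonal d * (1 - W) := by
      rw [hW', hWp', ← hgram, penalty_mul_pinv_mul hP]
    rw [hJ, mulVec_dotProduct_mulVec_mulVec, hK, mulVec_mulVec, objective_eq_quadObjective, hA', hb,
      transpose_mul]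
  refine minimizers_on_range_eq_image_solutions hApsd hJW ?_
  rw [hA', hb, ← transpose_mul]
  exact exists_mulVec_eq_transpose_mulVec _ hpenalty y

theorem stmt_12 (n m : ℕ) (hn : 1 ≤ n) (hm : 1 ≤ m)
    (d l : Fin n → ℝ) (hd : ∀ i, 0 < d i) (hl : ∀ i, 0 ≤ l i ∧ l i ≤ 1)
    (Q W Wp : Matrix (Fin n) (Fin n) ℝ)
    (hQ : Qᵀ * Q = 1)
    (hW : W = diagonal (fun i => (Real.sqrt (d i))⁻¹) * Q * diagonal l * Qᵀ *
      diagonal (fun i => Real.sqrt (d i)))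
    (hWp : Wp = diagonal (fun i => (Real.sqrt (d i))⁻¹) * Q *
      diagonal (fun i => if 0 < l i then (l i)⁻¹ else 0) * Qᵀ *
      diagonal (fun i => Real.sqrt (d i)))
    (F : Matrix (Fin m) (Fin n) ℝ) (y : Fin m → ℝ) (ρ : ℝ) (hρ : 0 < ρ)
    (J : (Fin n → ℝ) → ℝ)
    (hJ : ∀ x, J x = (1 / 2) * ((y - F *ᵥ x) ⬝ᵥ (y - F *ᵥ x)) +
      (ρ / 2) * (x ⬝ᵥ (diagonal d * (1 - W) * Wp) *ᵥ x))
    (A : Matrix (Fin n) (Fin n) ℝ) (b : Fin n → ℝ)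
    (hA : A = Wᵀ * Fᵀ * F * W + ρ • (Wᵀ * diagonal d * (1 - W)))
    (hb : b = (Wᵀ * Fᵀ) *ᵥ y) :
    (∀ xstar : Fin n → ℝ, (∃ u : Fin n → ℝ, W *ᵥ u = xstar) →
      ((∀ x : Fin n → ℝ, (∃ u : Fin n → ℝ, W *ᵥ u = x) → J xstar ≤ J x) ↔
        (∃ z : Fin n → ℝ, A *ᵥ z = b ∧ xstar = W *ᵥ z))) ∧
    (∃ xstar : Fin n → ℝ, (∃ u : Fin n → ℝ, W *ᵥ u = xstar) ∧
      ∀ x : Fin n → ℝ, (∃ u : Fin n → ℝ, W *ᵥ u = x) → J xstar ≤ J x) :=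
  stmt_12_general n m d l hd hl Q W Wp hQ hW hWp F y ρ hρ J hJ A b hA hb
end
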